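/- arXiv:2502.10853 — 2 statements merged into one kernel-verified Lean document; each statement's English description precedes it below -/
import Mathlib

section
/- Let A_S have full column rank and define x*_S − x̃_S = (A_S^⊤ A_S)^{−1}(A_S^⊤ η − λ·sign(x*_S)). If ‖(A_S^⊤ A_S)^{−1}‖_∞ · (‖A_S^⊤ η‖_∞ + λ) ≤ min_{i∈S} |x̃_i|, then sign(x*_S) = sign(x̃_S). -/
open Matrix BigOperators Finset

noncomputable section

/-- ℓ1 norm of a finitely-indexed real vector. -/
def l1 {ι : Type*} [Fintype ι] (v : ι → ℝ) : ℝ := ∑ i, |v i|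

/-- Squared ℓ2 norm. -/
def l2sq {ι : Type*} [Fintype ι] (v : ι → ℝ) : ℝ := ∑ i, (v i) ^ 2

/-- ℓ∞ norm (max absolute entry). -/
def linf {ι : Type*} [Fintype ι] (v : ι → ℝ) : ℝ := ⨆ i, |v i|

/-- Euclidean inner product. -/
def ip {ι : Type*} [Fintype ι] (u v : ι → ℝ) : ℝ := ∑ i, u i * v i

/-- Restriction of a vector to an index set (coordinates outside `S` set to zero). -/
def restr {n : ℕ} (S : Finset (Fin n)) (v : Fin n → ℝ) : Fin n → ℝ :=
  fun i => if i ∈ S then v i else 0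

/-- Operator norm induced by the vector ∞-norm: max row ℓ1-sum. -/
def opInf {ι κ : Type*} [Fintype ι] [Fintype κ] (M : Matrix ι κ ℝ) : ℝ :=
  ⨆ i, ∑ j, |M i j|

/-- Operator norm induced by the vector 1-norm: max column ℓ1-sum. -/
def op1 {ι κ : Type*} [Fintype ι] [Fintype κ] (M : Matrix ι κ ℝ) : ℝ :=
  ⨆ j, ∑ i, |M i j|

/-!
Every coordinate of `x* - x̃ = (AᵀA)⁻¹ b`, with `b = Aᵀη - λ sign x*`, is at most
`‖(AᵀA)⁻¹‖_∞ (‖Aᵀη‖_∞ + λ) ≤ min |x̃ⱼ| ≤ |x̃ᵢ|`, so a nonzero `x*ᵢ` has the sign of `x̃ᵢ`.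
If `x*ᵢ = 0`, then `bᵢ` misses the `λ` term, and since the diagonal entry `((AᵀA)⁻¹)ᵢᵢ` is
positive the bound improves by `((AᵀA)⁻¹)ᵢᵢ λ > 0`, contradicting `|x*ᵢ - x̃ᵢ| = |x̃ᵢ|`.
When `AᵀA` is singular, `(AᵀA)⁻¹` is the junk value `0` and `x* = x̃`.
-/

lemma Real.abs_sign_le_one (x : ℝ) : |Real.sign x| ≤ 1 := by
  rcases Real.sign_apply_eq x with h | h | h <;> simp [h]

lemma Real.sign_eq_of_abs_sub_le {x y : ℝ} (hy : y ≠ 0) (h : |y - x| ≤ |x|) :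
    Real.sign y = Real.sign x := by
  have hyx := abs_le.mp h
  rcases lt_trichotomy x 0 with hx | rfl | hx
  · rw [abs_of_neg hx] at hyx
    rw [Real.sign_of_neg (lt_of_le_of_ne (by linarith) hy), Real.sign_of_neg hx]
  · exact absurd (by simpa using h) hy
  · rw [abs_of_pos hx] at hyx
    rw [Real.sign_of_pos (lt_of_le_of_ne (by linarith) hy.symm), Real.sign_of_pos hx]

section InfinityNorms

variable {ι κ : Type*} [Fintype ι] [Fintype κ]

lemma abs_le_linf (v : ι → ℝ) (i : ι) : |v i| ≤ linf v :=
  le_ciSup (f := fun i => |v i|) (Set.finite_range _).bddAbove i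

lemma abs_sub_smul_sign_apply_le (c x : ι → ℝ) {lam : ℝ} (hlam : 0 ≤ lam) (j : ι) :
    |(c - lam • fun j => Real.sign (x j)) j| ≤ linf c + lam := calc
  |(c - lam • fun j => Real.sign (x j)) j| ≤ |c j| + lam * |Real.sign (x j)| := by
    simpa [abs_mul, abs_of_nonneg hlam] using abs_sub (c j) (lam * Real.sign (x j))
  _ ≤ linf c + lam :=
    add_le_add (abs_le_linf c j) (mul_le_of_le_one_right hlam (Real.abs_sign_le_one _))

lemma sum_abs_row_le_opInf (M : Matrix ι κ ℝ) (i : ι) : ∑ j, |M i j| ≤ opInf M :=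
  le_ciSup (f := fun i => ∑ j, |M i j|) (Set.finite_range _).bddAbove i

lemma abs_mulVec_apply_add_diag_slack_le (M : Matrix ι ι ℝ) {b : ι → ℝ} {R : ℝ}
    (hb : ∀ j, |b j| ≤ R) (i : ι) :
    |(M *ᵥ b) i| + |M i i| * (R - |b i|) ≤ opInf M * R := by
  have hR : 0 ≤ R := (abs_nonneg _).trans (hb i)
  calc |(M *ᵥ b) i| + |M i i| * (R - |b i|)
      ≤ ∑ j, |M i j| * |b j| + ∑ j, |M i j| * (R - |b j|) := by
        gcongr
        · simpa only [mulVec, dotProduct, abs_mul] using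
            abs_sum_le_sum_abs (fun j => M i j * b j) univ
        · exact single_le_sum (f := fun j => |M i j| * (R - |b j|))
            (fun j _ => mul_nonneg (abs_nonneg _) (sub_nonneg.mpr (hb j))) (mem_univ i)
    _ = (∑ j, |M i j|) * R := by
        rw [← sum_add_distrib, sum_mul]
        congr! 1 with j
        ring
    _ ≤ opInf M * R := mul_le_mul_of_nonneg_right (sum_abs_row_le_opInf M i) hR

end InfinityNorms

open scoped ComplexOrder in
lemma Matrix.PosSemidef.nonsing_inv_eq_zero_or_posDef {n 𝕜 : Type*} [Fintype n] [DecidableEq n]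
    [RCLike 𝕜] {N : Matrix n n 𝕜} (hN : N.PosSemidef) : N⁻¹ = 0 ∨ N⁻¹.PosDef := by
  by_cases h : IsUnit N.det
  · exact .inr <| hN.inv.posDef_iff_isUnit.mpr <|
      isUnit_nonsing_inv_iff.mpr ((isUnit_iff_isUnit_det N).mpr h)
  · exact .inl (nonsing_inv_apply_not_isUnit N h)

theorem stmt8_general {m k : ℕ} (A : Matrix (Fin m) (Fin k) ℝ)
    (xt xstar : Fin k → ℝ) (η : Fin m → ℝ) (lam : ℝ) (hlam : 0 < lam)
    (hdef : ∀ i, xstar i - xt i =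
      ((Aᵀ * A)⁻¹ *ᵥ (Aᵀ *ᵥ η - lam • fun j => Real.sign (xstar j))) i)
    (hcond : opInf (Aᵀ * A)⁻¹ * (linf (Aᵀ *ᵥ η) + lam) ≤ ⨅ i, |xt i|) :
    ∀ i, Real.sign (xstar i) = Real.sign (xt i) := by
  intro i
  have hPSD : (Aᵀ * A).PosSemidef :=
    A.conjTranspose_eq_transpose_of_trivial ▸ posSemidef_conjTranspose_mul_self A
  rcases hPSD.nonsing_inv_eq_zero_or_posDef with hM0 | hMpd
  · have hdef_i := hdef i
    rw [hM0, zero_mulVec] at hdef_i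
    rw [sub_eq_zero.mp hdef_i]
  set M := (Aᵀ * A)⁻¹
  set L := linf (Aᵀ *ᵥ η)
  set b := Aᵀ *ᵥ η - lam • fun j => Real.sign (xstar j)
  have hb : ∀ j, |b j| ≤ L + lam := abs_sub_smul_sign_apply_le _ xstar hlam.le
  have hslack := abs_mulVec_apply_add_diag_slack_le M hb i
  rw [← hdef] at hslack
  have hmin : (⨅ j, |xt j|) ≤ |xt i| := ciInf_le (Set.finite_range _).bddBelow i
  by_cases hx : xstar i = 0
  · have hbi : |b i| ≤ L := by simpa [b, hx] using abs_le_linf (Aᵀ *ᵥ η) i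
    rw [hx, zero_sub, abs_neg] at hslack
    have hgap : |M i i| * lam ≤ |M i i| * (L + lam - |b i|) :=
      mul_le_mul_of_nonneg_left (by linarith) (abs_nonneg _)
    linarith [mul_pos (abs_pos.mpr (hMpd.diag_pos (i := i)).ne') hlam]
  · refine Real.sign_eq_of_abs_sub_le hx ?_
    linarith [mul_nonneg (abs_nonneg (M i i)) (sub_nonneg.mpr (hb i))]

theorem stmt8 {m k : ℕ} (A : Matrix (Fin m) (Fin k) ℝ) (hrank : A.rank = k)
    (xt xstar : Fin k → ℝ) (η : Fin m → ℝ) (lam : ℝ) (hlam : 0 < lam)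
    (hxt : ∀ i, xt i ≠ 0)
    (hdef : ∀ i, xstar i - xt i =
      ((Aᵀ * A)⁻¹ *ᵥ (Aᵀ *ᵥ η - lam • fun j => Real.sign (xstar j))) i)
    (hcond : opInf (Aᵀ * A)⁻¹ * (linf (Aᵀ *ᵥ η) + lam) ≤ ⨅ i, |xt i|) :
    ∀ i, Real.sign (xstar i) = Real.sign (xt i) :=
  stmt8_general A xt xstar η lam hlam hdef hcond
end
end

section
/- (Theorem 1, noise-free core inequality) Let η = 0, y = Ax̃, x̃ supported on S with entries in [−d,d] and min nonzero magnitude μd, A_S full column rank, A_S^⊤A_S − λI invertible, and x* defined by x*_S = x̃_S + (A_S^⊤A_S − λI)^{−1}[λx̃_S − λd·sign(x*_S)], x*_{S̄} = 0, with sign(x*_S) = sign(x̃_S). Suppose: (i) ‖A_S^† A_{S̄}‖_1 < 1/ω; (ii) ‖Av‖_2² ≥ φ‖v‖_2² for all nonzero v ∈ C(α,S) with φ > λ; (iii) q := λd − (1/ω)‖A_S^⊤A_S(A_S^⊤A_S − λI)^{−1}‖_∞ · λd(1−μ) > λε(1+α)/α for some ε > 0. Then for every h ≠ 0 with ‖h‖_∞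 ≤ ε and |h_i| < |x*_i| for i ∈ S, F(x*+h) > F(x*), where F(x) = (1/2)‖y − Ax‖_2² + λ(d‖x‖_1 − (1/2)‖x‖_2²). -/
open Matrix BigOperators Finset

noncomputable section

/-!
The first-order part of `F(x* + h) - F(x*)` is governed by the correlation `t = Aᵀ(y - Ax*)`.
Since `y - Ax* = -A_S g` with `(A_SᵀA_S - λI) g = λx̃_S - λd·sign(x*_S)`, on `S` we get
`t_S = λd·sign(x*_S) - λx*_S`, which cancels the first-order change of the objective on `S`
(the condition `|h_i| < |x*_i|` keeps the signs of `x* + h` there). Off `S`,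
`t_{S̄} = -(A_S^† A_{S̄})ᵀ A_SᵀA_S g`, so by (i) and `|x̃_i - d·sign x̃_i| ≤ d(1 - μ)` its
entries are at most `B = (1/ω)‖A_SᵀA_S(A_SᵀA_S - λI)⁻¹‖_∞ λd(1 - μ)`. Hence
`F(x* + h) - F(x*) ≥ ½‖Ah‖₂² - (λ/2)‖h‖₂² + (λd - B)‖h_{S̄}‖₁`. On the cone `C(α,S)` condition (ii)
makes this positive; off the cone `‖h‖₂² ≤ ε‖h‖₁ < ε(1 + α)/α · ‖h_{S̄}‖₁`, and (iii) does.
-/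

section Norms

variable {ι κ : Type*} [Fintype ι] [Fintype κ]

lemma linf_nonneg (v : ι → ℝ) : 0 ≤ linf v :=
  Real.iSup_nonneg fun _ => abs_nonneg _

lemma linf_le {v : ι → ℝ} {a : ℝ} (h : ∀ i, |v i| ≤ a) (ha : 0 ≤ a) : linf v ≤ a :=
  Real.iSup_le h ha

lemma opInf_nonneg (M : Matrix ι κ ℝ) : 0 ≤ opInf M :=
  Real.iSup_nonneg fun _ => sum_nonneg fun _ _ => abs_nonneg _

lemma opInf_transpose (M : Matrix ι κ ℝ) : opInf Mᵀ = op1 M := rfl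

lemma abs_mulVec_le_opInf_mul_linf (M : Matrix ι κ ℝ) (v : κ → ℝ) (i : ι) :
    |(M *ᵥ v) i| ≤ opInf M * linf v :=
  calc |(M *ᵥ v) i| ≤ ∑ j, |M i j| * |v j| := by
        simpa only [mulVec, dotProduct, abs_mul] using
          abs_sum_le_sum_abs (fun j => M i j * v j) univ
    _ ≤ ∑ j, |M i j| * linf v :=
        sum_le_sum fun j _ => mul_le_mul_of_nonneg_left (abs_le_linf v j) (abs_nonneg _)
    _ = (∑ j, |M i j|) * linf v := (sum_mul ..).symm
    _ ≤ opInf M * linf v := mul_le_mul_of_nonneg_right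
        (le_ciSup (f := fun i => ∑ j, |M i j|) (Set.finite_range _).bddAbove i) (linf_nonneg v)

lemma linf_mulVec_le (M : Matrix ι κ ℝ) (v : κ → ℝ) : linf (M *ᵥ v) ≤ opInf M * linf v :=
  linf_le (abs_mulVec_le_opInf_mul_linf M v) (mul_nonneg (opInf_nonneg M) (linf_nonneg v))

lemma l2sq_add (u v : ι → ℝ) : l2sq (u + v) = l2sq u + 2 * ip u v + l2sq v := by
  simp only [l2sq, ip, Pi.add_apply, ← sum_add_distrib, mul_sum]
  exact sum_congr rfl fun i _ => by ring

lemma l2sq_sub (u v : ι → ℝ) : l2sq (u - v) = l2sq u - 2 * ip u v + l2sq v := by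
  simp only [l2sq, ip, Pi.sub_apply, ← sum_add_distrib, ← sum_sub_distrib, mul_sum]
  exact sum_congr rfl fun i _ => by ring

lemma l2sq_nonneg (v : ι → ℝ) : 0 ≤ l2sq v :=
  sum_nonneg fun _ _ => sq_nonneg _

lemma l2sq_pos {v : ι → ℝ} (hv : v ≠ 0) : 0 < l2sq v := by
  obtain ⟨i, hi⟩ := Function.ne_iff.mp hv
  exact (pow_pos (abs_pos.mpr hi) 2).trans_le <| by
    simpa only [sq_abs, l2sq] using single_le_sum (fun j _ => sq_nonneg (v j)) (mem_univ i)

lemma l2sq_le_linf_mul_l1 (v : ι → ℝ) : l2sq v ≤ linf v * l1 v := by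
  rw [l2sq, l1, mul_sum]
  refine sum_le_sum fun i _ => ?_
  rw [← sq_abs, sq]
  exact mul_le_mul_of_nonneg_right (abs_le_linf v i) (abs_nonneg _)

lemma ip_mulVec (M : Matrix ι κ ℝ) (r : ι → ℝ) (v : κ → ℝ) : ip r (M *ᵥ v) = ip (Mᵀ *ᵥ r) v := by
  simp only [ip, mulVec, dotProduct, mul_sum, sum_mul, transpose_apply]
  rw [sum_comm]
  exact sum_congr rfl fun j _ => sum_congr rfl fun i _ => by ring

end Norms

lemma l1_restr {n : ℕ} (S : Finset (Fin n)) (v : Fin n → ℝ) :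
    l1 (restr S v) = ∑ j ∈ S, |v j| := by
  simp only [l1, restr, apply_ite abs, abs_zero]
  exact Fintype.sum_ite_mem S fun j => |v j|

lemma l1_eq_l1_restr_add_l1_restr_compl {n : ℕ} (S : Finset (Fin n)) (v : Fin n → ℝ) :
    l1 v = l1 (restr S v) + l1 (restr Sᶜ v) := by
  rw [l1_restr, l1_restr, sum_add_sum_compl, l1]

lemma abs_sub_mul_sign_le {a d : ℝ} (ha : |a| ≤ d) : |a - d * Real.sign a| ≤ d - |a| := by
  rcases lt_trichotomy a 0 with hneg | rfl | hpos
  · rw [Real.sign_of_neg hneg, abs_of_neg hneg, abs_of_nonneg] <;> linarith [abs_of_neg hneg]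
  · simpa using ha
  · rw [Real.sign_of_pos hpos, abs_of_pos hpos, abs_of_nonpos] <;> linarith [abs_of_pos hpos]

lemma abs_mul_sub_mul_sign_le {a lam d μ : ℝ} (hlam : 0 ≤ lam) (ha : |a| ≤ d) (hμ : μ * d ≤ |a|) :
    |lam * a - lam * d * Real.sign a| ≤ lam * d * (1 - μ) := by
  rw [show lam * a - lam * d * Real.sign a = lam * (a - d * Real.sign a) by ring, abs_mul,
    abs_of_nonneg hlam]
  nlinarith [mul_le_mul_of_nonneg_left (abs_sub_mul_sign_le ha) hlam]

lemma abs_add_eq_of_abs_lt {x h : ℝ} (hh : |h| < |x|) : |x + h| = |x| + Real.sign x * h := by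
  rcases lt_trichotomy x 0 with hneg | rfl | hpos
  · rw [abs_of_neg hneg] at hh ⊢
    rw [Real.sign_of_neg hneg, abs_of_neg (by linarith [le_abs_self h])]
    ring
  · exact absurd hh (by simp)
  · rw [abs_of_pos hpos] at hh ⊢
    rw [Real.sign_of_pos hpos, abs_of_pos (by linarith [neg_abs_le h])]
    ring

def objective {m ι : Type*} [Fintype m] [Fintype ι] (A : Matrix m ι ℝ) (y : m → ℝ) (lam d : ℝ)
    (x : ι → ℝ) : ℝ :=
  1 / 2 * l2sq (y - A *ᵥ x) + lam * (d * l1 x - 1 / 2 * l2sq x)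

lemma objective_add_sub {m ι : Type*} [Fintype m] [Fintype ι] (A : Matrix m ι ℝ) (y : m → ℝ)
    (lam d : ℝ) (x h : ι → ℝ) :
    objective A y lam d (x + h) - objective A y lam d x =
      1 / 2 * l2sq (A *ᵥ h) - ip (Aᵀ *ᵥ (y - A *ᵥ x)) h + lam * d * (l1 (x + h) - l1 x)
        - lam * ip x h - lam / 2 * l2sq h := by
  have hres : y - A *ᵥ (x + h) = (y - A *ᵥ x) - A *ᵥ h := by rw [mulVec_add]; abel
  rw [objective, objective, hres, l2sq_sub, ip_mulVec, l2sq_add x h]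
  ring

lemma ip_eq_sum_add_sum_compl {n : ℕ} (u v : Fin n → ℝ) (S : Finset (Fin n)) :
    ip u v = ∑ j ∈ S, u j * v j + ∑ j ∈ Sᶜ, u j * v j :=
  (sum_add_sum_compl S _).symm

section Support

variable {n : ℕ} {S : Finset (Fin n)}

lemma l1_add_sub_of_abs_lt {x h : Fin n → ℝ} (hx : ∀ j ∉ S, x j = 0)
    (hh : ∀ j ∈ S, |h j| < |x j|) :
    l1 (x + h) - l1 x = ∑ j ∈ S, Real.sign (x j) * h j + l1 (restr Sᶜ h) := by
  have hS : ∑ j ∈ S, |(x + h) j| = ∑ j ∈ S, (|x j| + Real.sign (x j) * h j) :=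
    sum_congr rfl fun j hj => abs_add_eq_of_abs_lt (hh j hj)
  have hSc : ∑ j ∈ Sᶜ, |(x + h) j| = ∑ j ∈ Sᶜ, |h j| :=
    sum_congr rfl fun j hj => by rw [Pi.add_apply, hx j (mem_compl.mp hj), zero_add]
  have hxSc : ∑ j ∈ Sᶜ, |x j| = 0 :=
    sum_eq_zero fun j hj => by rw [hx j (mem_compl.mp hj), abs_zero]
  rw [l1_eq_l1_restr_add_l1_restr_compl S (x + h), l1_eq_l1_restr_add_l1_restr_compl S x,
    l1_restr, l1_restr, l1_restr, l1_restr, l1_restr, hS, hSc, hxSc, sum_add_distrib]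
  ring

lemma objective_add_sub_ge {m : Type*} [Fintype m] (A : Matrix m (Fin n) ℝ) (y : m → ℝ)
    {lam d B : ℝ} {x h : Fin n → ℝ} (hx : ∀ j ∉ S, x j = 0)
    (hstat : ∀ j ∈ S, (Aᵀ *ᵥ (y - A *ᵥ x)) j = lam * d * Real.sign (x j) - lam * x j)
    (hoff : ∀ j ∉ S, |(Aᵀ *ᵥ (y - A *ᵥ x)) j| ≤ B) (hh : ∀ j ∈ S, |h j| < |x j|) :
    1 / 2 * l2sq (A *ᵥ h) - lam / 2 * l2sq h + (lam * d - B) * l1 (restr Sᶜ h) ≤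
      objective A y lam d (x + h) - objective A y lam d x := by
  set t := Aᵀ *ᵥ (y - A *ᵥ x)
  have hxh : ip x h = ∑ j ∈ S, x j * h j := by
    rw [ip_eq_sum_add_sum_compl x h S,
      sum_eq_zero (s := Sᶜ) fun j hj => by rw [hx j (mem_compl.mp hj), zero_mul], add_zero]
  have htS : ∑ j ∈ S, t j * h j =
      lam * d * ∑ j ∈ S, Real.sign (x j) * h j - lam * ∑ j ∈ S, x j * h j := by
    rw [mul_sum, mul_sum, ← sum_sub_distrib]
    exact sum_congr rfl fun j hj => by rw [hstat j hj]; ring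
  have htSc : ∑ j ∈ Sᶜ, t j * h j ≤ B * l1 (restr Sᶜ h) := by
    rw [l1_restr, mul_sum]
    refine sum_le_sum fun j hj => ?_
    calc t j * h j ≤ |t j| * |h j| := (le_abs_self _).trans (abs_mul _ _).le
      _ ≤ B * |h j| := mul_le_mul_of_nonneg_right (hoff j (mem_compl.mp hj)) (abs_nonneg _)
  rw [objective_add_sub, l1_add_sub_of_abs_lt hx hh, ip_eq_sum_add_sum_compl t h S, htS, hxh]
  linarith

lemma quadratic_add_l1_pos {m : Type*} [Fintype m] (A : Matrix m (Fin n) ℝ) {h : Fin n → ℝ}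
    {lam φ α ε c : ℝ} (hlam : 0 ≤ lam) (hα : 0 < α) (hφ : lam < φ) (hh : h ≠ 0)
    (hhε : linf h ≤ ε)
    (hRE : l1 (restr Sᶜ h) ≤ α * l1 (restr S h) → φ * l2sq h ≤ l2sq (A *ᵥ h))
    (hc : lam * ε * (1 + α) / α < c) :
    0 < 1 / 2 * l2sq (A *ᵥ h) - lam / 2 * l2sq h + c * l1 (restr Sᶜ h) := by
  have hε : 0 ≤ ε := (linf_nonneg h).trans hhε
  have hTS : 0 ≤ l1 (restr S h) := sum_nonneg fun _ _ => abs_nonneg _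
  have hT : 0 ≤ l1 (restr Sᶜ h) := sum_nonneg fun _ _ => abs_nonneg _
  have hc0 : 0 < c := lt_of_le_of_lt (by positivity) hc
  have hh2 := l2sq_pos hh
  rcases le_or_gt (l1 (restr Sᶜ h)) (α * l1 (restr S h)) with hcone | hcone
  · nlinarith [hRE hcone, mul_nonneg hc0.le hT]
  · have hT' : 0 < l1 (restr Sᶜ h) := (mul_nonneg hα.le hTS).trans_lt hcone
    have hl2 : l2sq h ≤ ε * (l1 (restr S h) + l1 (restr Sᶜ h)) :=
      calc l2sq h ≤ linf h * l1 h := l2sq_le_linf_mul_l1 h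
        _ ≤ ε * l1 h := mul_le_mul_of_nonneg_right hhε (sum_nonneg fun _ _ => abs_nonneg _)
        _ = _ := by rw [l1_eq_l1_restr_add_l1_restr_compl S]
    have hc' : lam * ε * (1 + α) < c * α := by rwa [div_lt_iff₀ hα] at hc
    have hαl2 : α * (lam * l2sq h) < α * (c * l1 (restr Sᶜ h)) := by
      nlinarith [mul_le_mul_of_nonneg_left hl2 (mul_nonneg hα.le hlam),
        mul_lt_mul_of_pos_right hc' hT', mul_le_mul_of_nonneg_left hcone.le (mul_nonneg hlam hε)]
    nlinarith [lt_of_mul_lt_mul_left hαl2 hα.le, l2sq_nonneg (A *ᵥ h), mul_nonneg hlam hh2.le]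

end Support

lemma isUnit_det_of_rank_eq_card {k : Type*} [Fintype k] [DecidableEq k] {G : Matrix k k ℝ}
    (h : G.rank = Fintype.card k) : IsUnit G.det := by
  rw [← isUnit_iff_isUnit_det, ← mulVec_surjective_iff_isUnit]
  have hrange : LinearMap.range G.mulVecLin = ⊤ := by
    apply Submodule.eq_top_of_finrank_eq
    rw [← Matrix.rank, h, Module.finrank_fintype_fun_eq_card]
  exact fun v => LinearMap.range_eq_top.mp hrange v

section Gram

variable {m k l : Type*} [Fintype m] [Fintype k] [DecidableEq k]

lemma transpose_mul_eq_transpose_mul_gram (AS : Matrix m k ℝ) (ASb : Matrix m l ℝ)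
    (hG : IsUnit (ASᵀ * AS).det) :
    ASbᵀ * AS = ((ASᵀ * AS)⁻¹ * ASᵀ * ASb)ᵀ * (ASᵀ * AS) := by
  have hsymm : (ASᵀ * AS)ᵀ = ASᵀ * AS := by rw [transpose_mul, transpose_transpose]
  rw [transpose_mul, transpose_mul, transpose_transpose, transpose_nonsing_inv, hsymm,
    Matrix.mul_assoc, Matrix.mul_assoc, Matrix.nonsing_inv_mul _ hG, Matrix.mul_one]

lemma abs_transpose_mulVec_mulVec_le [Fintype l] (AS : Matrix m k ℝ) (ASb : Matrix m l ℝ)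
    (hG : IsUnit (ASᵀ * AS).det) (v : k → ℝ) (j : l) :
    |(ASbᵀ *ᵥ (AS *ᵥ v)) j| ≤ op1 ((ASᵀ * AS)⁻¹ * ASᵀ * ASb) * linf ((ASᵀ * AS) *ᵥ v) := by
  rw [mulVec_mulVec, transpose_mul_eq_transpose_mul_gram AS ASb hG, ← mulVec_mulVec,
    ← opInf_transpose]
  exact abs_mulVec_le_opInf_mul_linf _ _ j

end Gram

section Witness

variable {m ι : Type*} [Fintype ι] (A : Matrix m ι ℝ) {S : Finset ι}

local notation "A_S" => A.submatrix id (Subtype.val : S → ι)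
local notation "A_Sc" => A.submatrix id (Subtype.val : {j // j ∉ S} → ι)

lemma mulVec_eq_submatrix_mulVec_of_support {v : ι → ℝ} (hv : ∀ j ∉ S, v j = 0) :
    A *ᵥ v = A_S *ᵥ fun j => v j := by
  ext i
  simp only [mulVec, dotProduct, submatrix_apply, id]
  rw [sum_coe_sort S fun j => A i j * v j]
  exact (sum_subset (subset_univ S) fun j _ hj => by rw [hv j hj, mul_zero]).symm

variable {xt x : ι → ℝ} {g : S → ℝ}

lemma sub_mulVec_eq_neg_submatrix_mulVec (hxt : ∀ j ∉ S, xt j = 0) (hx : ∀ j ∉ S, x j = 0)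
    (hxS : ∀ j : S, x j = xt j + g j) :
    A *ᵥ xt - A *ᵥ x = -(A_S *ᵥ g) := by
  rw [← mulVec_sub, mulVec_eq_submatrix_mulVec_of_support A
    fun j hj => by rw [Pi.sub_apply, hxt j hj, hx j hj, sub_zero], ← mulVec_neg]
  congr 1
  ext j
  rw [Pi.sub_apply, hxS j, Pi.neg_apply]
  ring

variable [Fintype m] [DecidableEq ι]

lemma transpose_mulVec_sub_of_mem {lam d : ℝ} (hxt : ∀ j ∉ S, xt j = 0)
    (hx : ∀ j ∉ S, x j = 0) (hxS : ∀ j : S, x j = xt j + g j)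
    (hg : (A_Sᵀ * A_S - lam • (1 : Matrix S S ℝ)) *ᵥ g =
      fun j : S => lam * xt j - lam * d * Real.sign (x j))
    (j : ι) (hj : j ∈ S) :
    (Aᵀ *ᵥ (A *ᵥ xt - A *ᵥ x)) j = lam * d * Real.sign (x j) - lam * x j := by
  have hgj := congrFun hg ⟨j, hj⟩
  rw [sub_mulVec, smul_mulVec, one_mulVec, ← mulVec_mulVec] at hgj
  rw [sub_mulVec_eq_neg_submatrix_mulVec A hxt hx hxS, mulVec_neg]
  change -(A_Sᵀ *ᵥ (A_S *ᵥ g)) ⟨j, hj⟩ = _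
  simp only [Pi.sub_apply, Pi.smul_apply, smul_eq_mul] at hgj
  linear_combination -hgj + lam * hxS ⟨j, hj⟩

lemma abs_transpose_mulVec_sub_le_of_notMem (hxt : ∀ j ∉ S, xt j = 0)
    (hx : ∀ j ∉ S, x j = 0) (hxS : ∀ j : S, x j = xt j + g j)
    (hG : IsUnit (A_Sᵀ * A_S).det) (j : ι) (hj : j ∉ S) :
    |(Aᵀ *ᵥ (A *ᵥ xt - A *ᵥ x)) j| ≤
      op1 ((A_Sᵀ * A_S)⁻¹ * A_Sᵀ * A_Sc) * linf ((A_Sᵀ * A_S) *ᵥ g) := by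
  rw [sub_mulVec_eq_neg_submatrix_mulVec A hxt hx hxS, mulVec_neg]
  change |-(A_Scᵀ *ᵥ (A_S *ᵥ g)) ⟨j, hj⟩| ≤ _
  rw [abs_neg]
  exact abs_transpose_mulVec_mulVec_le _ _ hG g _

end Witness

theorem stmt17_general {m n : ℕ} (A : Matrix (Fin m) (Fin n) ℝ) (S : Finset (Fin n))
    (AS : Matrix (Fin m) {j : Fin n // j ∈ S} ℝ)
    (ASb : Matrix (Fin m) {j : Fin n // j ∉ S} ℝ)
    (hASdef : ∀ i j, AS i j = A i j.1) (hASbdef : ∀ i j, ASb i j = A i j.1)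
    (xt xstar : Fin n → ℝ) (y : Fin m → ℝ) (lam d μ ω φ α ε : ℝ)
    (hlam : 0 < lam) (hd : 0 < d) (hμ1 : μ ≤ 1)
    (hω : 0 < ω) (hα : 0 < α) (hφlam : lam < φ)
    -- noise-free measurements
    (hy : y = A *ᵥ xt)
    -- x̃ supported on S, entries in [−d,d], min nonzero magnitude μd
    (hsupp : ∀ j, j ∉ S → xt j = 0)
    (hbox : ∀ j, |xt j| ≤ d)
    (hmin : ∀ j ∈ S, μ * d ≤ |xt j|)
    -- A_S has full column rank and A_Sᵀ A_S − λI is invertible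
    (hrank : AS.rank = S.card)
    (hinv : IsUnit (ASᵀ * AS - lam • (1 : Matrix {j : Fin n // j ∈ S} {j : Fin n // j ∈ S} ℝ)).det)
    -- definition of x* and sign agreement
    (hxstarS : ∀ j : {j : Fin n // j ∈ S}, xstar j.1 = xt j.1 +
      ((ASᵀ * AS - lam • (1 : Matrix {j : Fin n // j ∈ S} {j : Fin n // j ∈ S} ℝ))⁻¹ *ᵥ
        (fun i : {j : Fin n // j ∈ S} => lam * xt i.1 - lam * d * Real.sign (xstar i.1))) j)
    (hxstarSc : ∀ j, j ∉ S → xstar j = 0)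
    (hsign : ∀ j ∈ S, Real.sign (xstar j) = Real.sign (xt j))
    -- (i) irrepresentable condition
    (hirr : op1 ((ASᵀ * AS)⁻¹ * ASᵀ * ASb) < 1 / ω)
    -- (ii) restricted eigenvalue condition on the cone C(α,S)
    (hRE : ∀ v : Fin n → ℝ, v ≠ 0 → l1 (restr Sᶜ v) ≤ α * l1 (restr S v) →
      φ * l2sq v ≤ l2sq (A *ᵥ v))
    -- (iii) condition C3 (noise-free)
    (hq : lam * d - (1 / ω) *
        opInf ((ASᵀ * AS) *
          (ASᵀ * AS - lam • (1 : Matrix {j : Fin n // j ∈ S} {j : Fin n // j ∈ S} ℝ))⁻¹) *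
        (lam * d * (1 - μ)) > lam * ε * (1 + α) / α)
    -- objective functional
    (F : (Fin n → ℝ) → ℝ)
    (hF : ∀ z, F z = (1 / 2) * l2sq (y - A *ᵥ z) + lam * (d * l1 z - (1 / 2) * l2sq z)) :
    ∀ h : Fin n → ℝ, h ≠ 0 → linf h ≤ ε → (∀ j ∈ S, |h j| < |xstar j|) →
      F (xstar + h) > F xstar := by
  intro h hh hhε hhS
  obtain rfl : AS = A.submatrix id Subtype.val := Matrix.ext hASdef
  obtain rfl : ASb = A.submatrix id Subtype.val := Matrix.ext hASbdef
  obtain rfl : F = objective A y lam d := funext hF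
  subst hy
  set G := (A.submatrix id (Subtype.val : S → Fin n))ᵀ * A.submatrix id Subtype.val
  set u : S → ℝ := fun i => lam * xt i - lam * d * Real.sign (xstar i)
  have hg : (G - lam • (1 : Matrix S S ℝ)) *ᵥ ((G - lam • 1)⁻¹ *ᵥ u) = u := by
    rw [mulVec_mulVec, mul_nonsing_inv _ hinv, one_mulVec]
  have hG : IsUnit G.det := isUnit_det_of_rank_eq_card <| by
    rw [rank_transpose_mul_self, hrank, Fintype.card_coe]
  have hu : linf u ≤ lam * d * (1 - μ) := by
    refine linf_le (fun i => ?_) (mul_nonneg (by positivity) (by linarith))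
    simpa only [u, hsign i i.2] using abs_mul_sub_mul_sign_le hlam.le (hbox i) (hmin i i.2)
  have hoff : ∀ j ∉ S, |(Aᵀ *ᵥ (A *ᵥ xt - A *ᵥ xstar)) j| ≤
      1 / ω * opInf (G * (G - lam • 1)⁻¹) * (lam * d * (1 - μ)) := fun j hj =>
    calc _ ≤ _ := abs_transpose_mulVec_sub_le_of_notMem A hsupp hxstarSc hxstarS hG j hj
      _ ≤ 1 / ω * (opInf (G * (G - lam • 1)⁻¹) * (lam * d * (1 - μ))) := by
          rw [mulVec_mulVec]
          exact mul_le_mul hirr.le ((linf_mulVec_le _ _).trans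
            (mul_le_mul_of_nonneg_left hu (opInf_nonneg _))) (linf_nonneg _) (by positivity)
      _ = _ := by ring
  have hstat := transpose_mulVec_sub_of_mem A hsupp hxstarSc hxstarS hg
  have hgap := objective_add_sub_ge A (A *ᵥ xt) hxstarSc hstat hoff hhS
  have hpos := quadratic_add_l1_pos A hlam.le hα hφlam hh hhε (hRE h hh) hq
  linarith

theorem stmt17 {m n : ℕ} (A : Matrix (Fin m) (Fin n) ℝ) (S : Finset (Fin n))
    (AS : Matrix (Fin m) {j : Fin n // j ∈ S} ℝ)
    (ASb : Matrix (Fin m) {j : Fin n // j ∉ S} ℝ)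
    (hASdef : ∀ i j, AS i j = A i j.1) (hASbdef : ∀ i j, ASb i j = A i j.1)
    (xt xstar : Fin n → ℝ) (y : Fin m → ℝ) (lam d μ ω φ α ε : ℝ)
    (hlam : 0 < lam) (hd : 0 < d) (hμ0 : 0 < μ) (hμ1 : μ ≤ 1)
    (hω : 0 < ω) (hα : 0 < α) (hε : 0 < ε) (hφlam : lam < φ)
    -- noise-free measurements
    (hy : y = A *ᵥ xt)
    -- x̃ supported on S, entries in [−d,d], min nonzero magnitude μd
    (hsupp : ∀ j, j ∉ S → xt j = 0)
    (hbox : ∀ j, |xt j| ≤ d)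
    (hmin : ∀ j ∈ S, μ * d ≤ |xt j|)
    -- A_S has full column rank and A_Sᵀ A_S − λI is invertible
    (hrank : AS.rank = S.card)
    (hinv : IsUnit (ASᵀ * AS - lam • (1 : Matrix {j : Fin n // j ∈ S} {j : Fin n // j ∈ S} ℝ)).det)
    -- definition of x* and sign agreement
    (hxstarS : ∀ j : {j : Fin n // j ∈ S}, xstar j.1 = xt j.1 +
      ((ASᵀ * AS - lam • (1 : Matrix {j : Fin n // j ∈ S} {j : Fin n // j ∈ S} ℝ))⁻¹ *ᵥ
        (fun i : {j : Fin n // j ∈ S} => lam * xt i.1 - lam * d * Real.sign (xstar i.1))) j)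
    (hxstarSc : ∀ j, j ∉ S → xstar j = 0)
    (hsign : ∀ j ∈ S, Real.sign (xstar j) = Real.sign (xt j))
    -- (i) irrepresentable condition
    (hirr : op1 ((ASᵀ * AS)⁻¹ * ASᵀ * ASb) < 1 / ω)
    -- (ii) restricted eigenvalue condition on the cone C(α,S)
    (hRE : ∀ v : Fin n → ℝ, v ≠ 0 → l1 (restr Sᶜ v) ≤ α * l1 (restr S v) →
      φ * l2sq v ≤ l2sq (A *ᵥ v))
    -- (iii) condition C3 (noise-free)
    (hq : lam * d - (1 / ω) *
        opInf ((ASᵀ * AS) *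
          (ASᵀ * AS - lam • (1 : Matrix {j : Fin n // j ∈ S} {j : Fin n // j ∈ S} ℝ))⁻¹) *
        (lam * d * (1 - μ)) > lam * ε * (1 + α) / α)
    -- objective functional
    (F : (Fin n → ℝ) → ℝ)
    (hF : ∀ z, F z = (1 / 2) * l2sq (y - A *ᵥ z) + lam * (d * l1 z - (1 / 2) * l2sq z)) :
    ∀ h : Fin n → ℝ, h ≠ 0 → linf h ≤ ε → (∀ j ∈ S, |h j| < |xstar j|) →
      F (xstar + h) > F xstar :=
  stmt17_general A S AS ASb hASdef hASbdef xt xstar y lam d μ ω φ α ε hlam hd hμ1 hω hα hφlam hy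
    hsupp hbox hmin hrank hinv hxstarS hxstarSc hsign hirr hRE hq F hF
end
end
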